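/- arXiv:2302.02686 — 2 statements merged into one kernel-verified Lean document; each statement's English description precedes it below -/
import Mathlib

section
/- Let G(E) be a well-formed TFG for (N1,m1) ▷_E (N2,m2), with both nets safe, and C its node concurrency relation. If v C v (v nondead) and there is a redundancy arc v →• w, then v' C w' for every pair (v',w') with v' ∈ succ(v) \ succ(w) and w' ∈ succ(w). -/
/-!
A total well-defined configuration is the same as a solution of the equations of the TFG. Any
solution can be recomputed on the strict successors of a node `x` by letting every agglomeration
node hand its whole value to one chosen child and every other node take the sum of its redundancy
parents; choosing the child `y` at `x` moves the token of `x` to `y` and leaves the roots, which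
carry the constants and the places of `N2`, untouched. Pushing the token of `v` to `v'` keeps it
on `v`, so `w` is marked through `v →• w`; pushing it on from `w` to `w'` leaves `v'` marked
because `v' ∉ succ(w)`.
-/

open Finset

/-- A Petri net over a type of places `P`. -/
structure PetriNet (P : Type) where
  Trans : Type
  pre : Trans → P → ℕ
  post : Trans → P → ℕ

/-- Firing relation between markings. -/
def PetriNet.fire {P : Type} (N : PetriNet P) (m m' : P → ℕ) : Prop :=
  ∃ t : N.Trans, (∀ p, N.pre t p ≤ m p) ∧ ∀ p, m' p = m p - N.pre t p + N.post t p

/-- Reachability of a marking from an initial one. -/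
def PetriNet.reach {P : Type} (N : PetriNet P) (m0 m : P → ℕ) : Prop :=
  Relation.ReflTransGen N.fire m0 m

/-- A marked net is safe (1-bounded) when every reachable marking has at most one token per place. -/
def PetriNet.Safe {P : Type} (N : PetriNet P) (m0 : P → ℕ) : Prop :=
  ∀ m, N.reach m0 m → ∀ p, m p ≤ 1

/-- Two places are concurrent when some reachable marking marks both positively. -/
def PetriNet.ConcPlaces {P : Type} (N : PetriNet P) (m0 : P → ℕ) (p q : P) : Prop :=
  ∃ m, N.reach m0 m ∧ 0 < m p ∧ 0 < m q

/-- A Token Flow Graph: redundancy arcs `R`, agglomeration arcs `A` (disjoint from `R`,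
enforced in well-formedness), and constant nodes given by `kval`. -/
structure TFG (V : Type) [DecidableEq V] where
  R : Finset (V × V)
  A : Finset (V × V)
  kval : V → Option ℕ

variable {V : Type} [DecidableEq V]

def TFG.Edge (G : TFG V) (v w : V) : Prop := (v, w) ∈ G.R ∨ (v, w) ∈ G.A

/-- `G.Reach v w` means `v →* w`. -/
def TFG.Reach (G : TFG V) : V → V → Prop := Relation.ReflTransGen G.Edge

/-- Successor set `succ(v)` (includes `v` itself). -/
def TFG.succs (G : TFG V) (v : V) : Set V := {w | G.Reach v w}

/-- A root has no incoming arc. -/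
def TFG.IsRoot (G : TFG V) (v : V) : Prop := ∀ w, ¬ G.Edge w v

/-- A ∘-leaf has no outgoing agglomeration arc. -/
def TFG.IsCircLeaf (G : TFG V) (v : V) : Prop := ∀ w, (v, w) ∉ G.A

/-- The set `X` such that `v ∘→ X` (agglomeration children of `v`). -/
def TFG.aggChildren (G : TFG V) (v : V) : Finset V :=
  (G.A.filter (fun e => e.1 = v)).image Prod.snd

/-- The set `X` such that `X →• v` (redundancy parents of `v`). -/
def TFG.redParents (G : TFG V) (v : V) : Finset V :=
  (G.R.filter (fun e => e.2 = v)).image Prod.fst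

/-- A configuration is a partial valuation of the nodes; it must agree with constant nodes. -/
def TFG.IsConfig (G : TFG V) (c : V → Option ℕ) : Prop :=
  ∀ v n, G.kval v = some n → c v = some n

/-- A configuration is total when it is defined on every node. -/
def TotalConf (c : V → Option ℕ) : Prop := ∀ v, c v ≠ none

/-- Value of a configuration at a node (0 if undefined). -/
def cval (c : V → Option ℕ) (v : V) : ℕ := (c v).getD 0

/-- Well-definedness of a configuration: conditions (CBot) and (CEq). -/
def TFG.WellDef (G : TFG V) (c : V → Option ℕ) : Prop :=
  (∀ v w, G.Edge v w → (c v = none ↔ c w = none)) ∧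
  (∀ v n, c v = some n →
    ((G.aggChildren v).Nonempty → n = ∑ w ∈ G.aggChildren v, cval c w) ∧
    ((G.redParents v).Nonempty → n = ∑ w ∈ G.redParents v, cval c w))

/-- A system of reduction equations: `(v, X)` stands for the equation `v = ∑_{w ∈ X} w`. -/
abbrev EqSys (V : Type) := Finset (V × Finset V)

/-- A (non-negative integer) solution of the system `E`. -/
def Solves (E : EqSys V) (s : V → ℕ) : Prop :=
  ∀ e ∈ E, s e.1 = ∑ w ∈ e.2, s w

/-- `E, ⟦c⟧` is consistent: some solution of `E` extends the partial valuation `c`. -/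
def ConsistentWith (E : EqSys V) (c : V → Option ℕ) : Prop :=
  ∃ s : V → ℕ, Solves E s ∧ ∀ v n, c v = some n → s v = n

/-- Variables occurring in `E`. -/
def fvars (E : EqSys V) : Set V := {v | ∃ e ∈ E, v = e.1 ∨ v ∈ e.2}

/-- View a marking over the set of places `P` as a partial configuration over `V`. -/
def mconf (P : Set V) [DecidablePred (· ∈ P)] (m : ↥P → ℕ) : V → Option ℕ :=
  fun v => if h : v ∈ P then some (m ⟨v, h⟩) else none

/-- Restriction of a configuration to a set of places, seen as a marking. -/
def restrict (c : V → Option ℕ) (P : Set V) : ↥P → ℕ := fun p => cval c ↑p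

/-- Compatibility `c ≡ m` of a configuration with a marking on `P`. -/
def CompatM (c : V → Option ℕ) (P : Set V) (m : ↥P → ℕ) : Prop :=
  ∀ p : ↥P, c ↑p = some (m p)

/-- A solution of `E` agrees with a marking on `P`. -/
def AgreesOn (s : V → ℕ) (P : Set V) (m : ↥P → ℕ) : Prop := ∀ p : ↥P, s ↑p = m p

/-- `E`-equivalence `(N1,m1) ▷_E (N2,m2)`: conditions (A1), (A2), (A3). -/
structure EEquiv (E : EqSys V) (P1 P2 : Set V)
    (N1 : PetriNet ↥P1) (m1 : ↥P1 → ℕ) (N2 : PetriNet ↥P2) (m2 : ↥P2 → ℕ) : Prop where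
  A1l : ∀ m, N1.reach m1 m → ∃ s, Solves E s ∧ AgreesOn s P1 m
  A1r : ∀ m, N2.reach m2 m → ∃ s, Solves E s ∧ AgreesOn s P2 m
  A2 : ∃ s, Solves E s ∧ AgreesOn s P1 m1 ∧ AgreesOn s P2 m2
  A3 : ∀ m1' m2', (∃ s, Solves E s ∧ AgreesOn s P1 m1' ∧ AgreesOn s P2 m2') →
      (N1.reach m1 m1' ↔ N2.reach m2 m2')

/-- Well-formedness of a TFG for an equivalence statement: conditions (T1)–(T6). -/
structure WellFormed (G : TFG V) (E : EqSys V) (P1 P2 : Set V) : Prop where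
  T1 : {v | G.kval v = none} = P1 ∪ P2 ∪ fvars E
  T2 : ∀ v, G.kval v ≠ none → G.IsRoot v
  T3a : ∀ p p' q, (p, q) ∈ G.A → G.Edge p' q → p' = p
  T3b : ∀ p q, ¬((p, q) ∈ G.R ∧ (p, q) ∈ G.A)
  T4 : ∀ v X, ((X = G.aggChildren v ∨ X = G.redParents v) ∧ X.Nonempty) ↔ (v, X) ∈ E
  T5 : ∀ v, ¬ Relation.TransGen G.Edge v v
  T6root : ∀ v, G.kval v = none → (G.IsRoot v ↔ v ∈ P2)
  T6leaf : ∀ v, G.kval v = none → (G.IsCircLeaf v ↔ v ∈ P1)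

/-- Node concurrency relation of the TFG: both nodes are positive in some
total, well-defined configuration whose restriction to `N2` is reachable. -/
def NodeConc (G : TFG V) (P2 : Set V) [DecidablePred (· ∈ P2)]
    (N2 : PetriNet ↥P2) (m2 : ↥P2 → ℕ) (v w : V) : Prop :=
  ∃ c, G.IsConfig c ∧ TotalConf c ∧ G.WellDef c ∧ N2.reach m2 (restrict c P2) ∧
    0 < cval c v ∧ 0 < cval c w


open Relation

namespace TFG

variable {G : TFG V}

theorem mem_redParents {p m : V} : p ∈ G.redParents m ↔ (p, m) ∈ G.R := by
  simp [TFG.redParents]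

theorem mem_aggChildren {p c : V} : c ∈ G.aggChildren p ↔ (p, c) ∈ G.A := by
  simp [TFG.aggChildren]

theorem IsRoot.not_transGen {u : V} (hu : G.IsRoot u) (x : V) : ¬ TransGen G.Edge x u := by
  intro h
  obtain ⟨p, -, hpu⟩ := TransGen.tail'_iff.1 h
  exact hu p hpu

/-- The conditions (T3) and (T5) of well-formedness. -/
structure WellShaped (G : TFG V) : Prop where
  eq_of_mem_A : ∀ p p' q, (p, q) ∈ G.A → G.Edge p' q → p' = p
  not_mem_R_and_A : ∀ p q, ¬((p, q) ∈ G.R ∧ (p, q) ∈ G.A)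
  acyclic : ∀ v, ¬ TransGen G.Edge v v

structure IsSolution (G : TFG V) (s : V → ℕ) : Prop where
  agg : ∀ m, (G.aggChildren m).Nonempty → s m = ∑ c ∈ G.aggChildren m, s c
  red : ∀ m, (G.redParents m).Nonempty → s m = ∑ p ∈ G.redParents m, s p

theorem IsSolution.le_of_mem_R {s : V → ℕ} (hs : G.IsSolution s) {x y : V} (h : (x, y) ∈ G.R) :
    s x ≤ s y := by
  rw [hs.red y ⟨x, mem_redParents.2 h⟩]
  exact single_le_sum (fun _ _ => Nat.zero_le _) (mem_redParents.2 h)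

theorem wellDef_some_iff {s : V → ℕ} : G.WellDef (fun u => some (s u)) ↔ G.IsSolution s := by
  simp only [TFG.WellDef, cval, Option.getD_some, Option.some_inj, reduceCtorEq, iff_self,
    implies_true, true_and, forall_eq']
  exact ⟨fun h => ⟨fun m => (h m).1, fun m => (h m).2⟩, fun h m => ⟨h.agg m, h.red m⟩⟩

namespace WellShaped

theorem wellFounded (hG : G.WellShaped) : WellFounded G.Edge := by
  have : IsStrictOrder V (TransGen G.Edge) :=
    { irrefl := hG.acyclic, trans := fun _ _ _ => TransGen.trans }
  let S : Finset V := (G.R ∪ G.A).image Prod.fst ∪ (G.R ∪ G.A).image Prod.snd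
  have hS : ∀ {a b}, G.Edge a b → a ∈ S ∧ b ∈ S := fun hab => by
    have hab : (_, _) ∈ G.R ∪ G.A := mem_union.2 hab
    exact ⟨mem_union_left _ (mem_image_of_mem _ hab), mem_union_right _ (mem_image_of_mem _ hab)⟩
  exact Subrelation.wf (fun hab => ⟨TransGen.single hab, hS hab⟩)
    (Set.wellFoundedOn_iff.1 (S.finite_toSet.wellFoundedOn (r := TransGen G.Edge)))

theorem reach_of_transGen_of_mem_A (hG : G.WellShaped) {x p c : V} (hpc : (p, c) ∈ G.A)
    (hxc : TransGen G.Edge x c) : G.Reach x p := by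
  obtain ⟨b, hxb, hbc⟩ := TransGen.tail'_iff.1 hxc
  rwa [← hG.eq_of_mem_A p b c hpc hbc]

theorem not_mem_A_of_nonempty_redParents (hG : G.WellShaped) {m : V}
    (hm : (G.redParents m).Nonempty) (p : V) : (p, m) ∉ G.A := by
  intro hpm
  obtain ⟨q, hq⟩ := hm
  rw [mem_redParents] at hq
  obtain rfl := hG.eq_of_mem_A p q m hpm (Or.inl hq)
  exact hG.not_mem_R_and_A q m ⟨hq, hpm⟩

open Classical in
/-- Recomputes `s` on the strict successors of `x`, top-down: each agglomeration node `p` hands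
its whole value to its child `ch p`, each other node takes the sum of its redundancy parents. -/
noncomputable def reroute (hG : G.WellShaped) (s : V → ℕ) (x : V) (ch : V → V) : V → ℕ :=
  hG.wellFounded.fix fun m r =>
    if TransGen G.Edge x m then
      if h : ∃ p, (p, m) ∈ G.A then
        if m = ch h.choose then r h.choose (Or.inr h.choose_spec) else 0
      else ∑ p ∈ (G.redParents m).attach, r p (Or.inl (mem_redParents.1 p.2))
    else s m

variable {s : V → ℕ} {x : V} {ch : V → V}

theorem reroute_of_not_transGen (hG : G.WellShaped) {m : V} (hm : ¬ TransGen G.Edge x m) :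
    hG.reroute s x ch m = s m := by
  rw [reroute, WellFounded.fix_eq, if_neg hm]

theorem reroute_of_mem_A (hG : G.WellShaped) {p m : V} (hm : TransGen G.Edge x m)
    (hpm : (p, m) ∈ G.A) :
    hG.reroute s x ch m = if m = ch p then hG.reroute s x ch p else 0 := by
  have h : ∃ p, (p, m) ∈ G.A := ⟨p, hpm⟩
  obtain rfl : h.choose = p := hG.eq_of_mem_A p _ m hpm (Or.inr h.choose_spec)
  rw [reroute, WellFounded.fix_eq, if_pos hm, dif_pos h]

theorem reroute_of_nonempty_redParents (hG : G.WellShaped) {m : V} (hm : TransGen G.Edge x m)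
    (hred : (G.redParents m).Nonempty) :
    hG.reroute s x ch m = ∑ p ∈ G.redParents m, hG.reroute s x ch p := by
  have h : ¬ ∃ p, (p, m) ∈ G.A := fun ⟨p, hpm⟩ => hG.not_mem_A_of_nonempty_redParents hred p hpm
  rw [reroute, WellFounded.fix_eq, if_pos hm, dif_neg h]
  exact sum_attach _ (fun p => hG.reroute s x ch p)

theorem isSolution_reroute (hG : G.WellShaped) (hs : G.IsSolution s)
    (hch : ∀ p c, (p, c) ∈ G.A → (p, ch p) ∈ G.A) : G.IsSolution (hG.reroute s x ch) := by
  constructor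
  · rintro m ⟨c₀, hc₀⟩
    by_cases hxm : G.Reach x m
    · have hchild : ∀ c ∈ G.aggChildren m,
          hG.reroute s x ch c = if c = ch m then hG.reroute s x ch m else 0 := fun c hc =>
        hG.reroute_of_mem_A (TransGen.tail' hxm (Or.inr (mem_aggChildren.1 hc)))
          (mem_aggChildren.1 hc)
      rw [sum_congr rfl hchild, sum_ite_eq', if_pos]
      exact mem_aggChildren.2 (hch m c₀ (mem_aggChildren.1 hc₀))
    · have hchild : ∀ c ∈ G.aggChildren m, hG.reroute s x ch c = s c := fun c hc =>
        hG.reroute_of_not_transGen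
          fun hxc => hxm (hG.reach_of_transGen_of_mem_A (mem_aggChildren.1 hc) hxc)
      rw [sum_congr rfl hchild, hG.reroute_of_not_transGen fun h => hxm h.to_reflTransGen]
      exact hs.agg m ⟨c₀, hc₀⟩
  · intro m hred
    by_cases hxm : TransGen G.Edge x m
    · exact hG.reroute_of_nonempty_redParents hxm hred
    · have hparent : ∀ p ∈ G.redParents m, hG.reroute s x ch p = s p := fun p hp =>
        hG.reroute_of_not_transGen fun hxp => hxm (hxp.tail (Or.inl (mem_redParents.1 hp)))
      rw [sum_congr rfl hparent, hG.reroute_of_not_transGen hxm]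
      exact hs.red m hred

theorem exists_isSolution_pos_of_edge (hG : G.WellShaped) (hs : G.IsSolution s) {y : V}
    (hx : 0 < s x) (hxy : G.Edge x y) :
    ∃ s', G.IsSolution s' ∧ 0 < s' y ∧ ∀ u, ¬ TransGen G.Edge x u → s' u = s u := by
  rcases hxy with hR | hA
  · exact ⟨s, hs, hx.trans_le (hs.le_of_mem_R hR), fun _ _ => rfl⟩
  classical
  let ch : V → V := fun p => if p = x then y else if h : ∃ c, (p, c) ∈ G.A then h.choose else p
  have hch : ∀ p c, (p, c) ∈ G.A → (p, ch p) ∈ G.A := by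
    intro p c hpc
    by_cases hp : p = x
    · subst hp
      simpa [ch] using hA
    · have h : ∃ c, (p, c) ∈ G.A := ⟨c, hpc⟩
      simpa [ch, hp, h] using h.choose_spec
  refine ⟨hG.reroute s x ch, hG.isSolution_reroute hs hch, ?_,
    fun u hu => hG.reroute_of_not_transGen hu⟩
  rwa [hG.reroute_of_mem_A (TransGen.single (Or.inr hA)) hA, if_pos (by simp [ch]),
    hG.reroute_of_not_transGen (hG.acyclic x)]

theorem exists_isSolution_pos_of_reach (hG : G.WellShaped) (hs : G.IsSolution s) {y : V}
    (hx : 0 < s x) (hxy : G.Reach x y) :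
    ∃ s', G.IsSolution s' ∧ 0 < s' y ∧ ∀ u, ¬ TransGen G.Edge x u → s' u = s u := by
  induction hxy using ReflTransGen.head_induction_on generalizing s with
  | refl => exact ⟨s, hs, hx, fun _ _ => rfl⟩
  | head hxb _ ih =>
    obtain ⟨s₁, hs₁, hb, hframe₁⟩ := hG.exists_isSolution_pos_of_edge hs hx hxb
    obtain ⟨s₂, hs₂, hy, hframe₂⟩ := ih hs₁ hb
    exact ⟨s₂, hs₂, hy, fun u hu =>
      (hframe₂ u fun hbu => hu (TransGen.head hxb hbu)).trans (hframe₁ u hu)⟩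

theorem exists_isSolution_pos_pos_of_mem_R (hG : G.WellShaped) (hs : G.IsSolution s)
    {v w v' w' : V} (hv : 0 < s v) (hvw : (v, w) ∈ G.R) (hvv' : G.Reach v v')
    (hwv' : ¬ G.Reach w v') (hww' : G.Reach w w') :
    ∃ s', G.IsSolution s' ∧ 0 < s' v' ∧ 0 < s' w' ∧ ∀ u, G.IsRoot u → s' u = s u := by
  obtain ⟨s₁, hs₁, hv'₁, hframe₁⟩ := hG.exists_isSolution_pos_of_reach hs hv hvv'
  have hw₁ : 0 < s₁ w := by
    rw [← hframe₁ v (hG.acyclic v)] at hv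
    exact hv.trans_le (hs₁.le_of_mem_R hvw)
  obtain ⟨s₂, hs₂, hw'₂, hframe₂⟩ := hG.exists_isSolution_pos_of_reach hs₁ hw₁ hww'
  refine ⟨s₂, hs₂, ?_, hw'₂, fun u hu => ?_⟩
  · rwa [hframe₂ v' fun h => hwv' h.to_reflTransGen]
  · rw [hframe₂ u (hu.not_transGen w), hframe₁ u (hu.not_transGen v)]

end WellShaped

end TFG

namespace WellFormed

variable {G : TFG V} {E : EqSys V} {P1 P2 : Set V}

theorem wellShaped (hwf : WellFormed G E P1 P2) : G.WellShaped :=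
  ⟨hwf.T3a, hwf.T3b, hwf.T5⟩

theorem isRoot_of_mem_P2 (hwf : WellFormed G E P1 P2) {p : V} (hp : p ∈ P2) : G.IsRoot p := by
  have hk : p ∈ {v | G.kval v = none} := by
    rw [hwf.T1]
    exact Or.inl (Or.inr hp)
  exact (hwf.T6root p hk).2 hp

theorem nodeConc_of_eqOn_roots [DecidablePred (· ∈ P2)] {N2 : PetriNet ↥P2} {m2 : ↥P2 → ℕ}
    (hwf : WellFormed G E P1 P2) {s s' : V → ℕ} (hconf : G.IsConfig fun u => some (s u))
    (hreach : N2.reach m2 (restrict (fun u => some (s u)) P2)) (hs' : G.IsSolution s')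
    (hroots : ∀ u, G.IsRoot u → s' u = s u) {v w : V} (hv : 0 < s' v) (hw : 0 < s' w) :
    NodeConc G P2 N2 m2 v w := by
  refine ⟨fun u => some (s' u), fun u n hn => ?_, fun u => Option.some_ne_none _,
    TFG.wellDef_some_iff.2 hs', ?_, hv, hw⟩
  · exact (congrArg some (hroots u (hwf.T2 u (by simp [hn])))).trans (hconf u n hn)
  · convert hreach using 1
    funext p
    exact hroots p (hwf.isRoot_of_mem_P2 p.2)

end WellFormed

theorem concurrency_redundancy_nodes_general {V : Type} [DecidableEq V] (G : TFG V) (E : EqSys V)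
    (P1 P2 : Set V) [DecidablePred (· ∈ P2)]
    (N2 : PetriNet ↥P2) (m2 : ↥P2 → ℕ)
    (hwf : WellFormed G E P1 P2)
    (v w : V) (hv : NodeConc G P2 N2 m2 v v) (hvw : (v, w) ∈ G.R) :
    ∀ v' ∈ G.succs v \ G.succs w, ∀ w' ∈ G.succs w, NodeConc G P2 N2 m2 v' w' := by
  rintro v' ⟨hvv', hwv'⟩ w' hww'
  obtain ⟨c, hconf, htot, hwd, hreach, hv0, -⟩ := hv
  obtain ⟨s, rfl⟩ : ∃ s : V → ℕ, c = fun u => some (s u) :=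
    ⟨cval c, funext fun u => (Option.getD_of_ne_none (htot u) 0).symm⟩
  obtain ⟨s', hs', hv', hw', hroots⟩ :=
    hwf.wellShaped.exists_isSolution_pos_pos_of_mem_R (TFG.wellDef_some_iff.1 hwd) hv0 hvw
      hvv' hwv' hww'
  exact hwf.nodeConc_of_eqOn_roots hconf hreach hs' hroots hv' hw'

theorem concurrency_redundancy_nodes {V : Type} [DecidableEq V] (G : TFG V) (E : EqSys V)
    (P1 P2 : Set V) [DecidablePred (· ∈ P1)] [DecidablePred (· ∈ P2)]
    (N1 : PetriNet ↥P1) (m1 : ↥P1 → ℕ) (N2 : PetriNet ↥P2) (m2 : ↥P2 → ℕ)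
    (hwf : WellFormed G E P1 P2) (heq : EEquiv E P1 P2 N1 m1 N2 m2)
    (hsafe1 : N1.Safe m1) (hsafe2 : N2.Safe m2)
    (v w : V) (hv : NodeConc G P2 N2 m2 v v) (hvw : (v, w) ∈ G.R) :
    ∀ v' ∈ G.succs v \ G.succs w, ∀ w' ∈ G.succs w, NodeConc G P2 N2 m2 v' w' :=
  concurrency_redundancy_nodes_general G E P1 P2 N2 m2 hwf v w hv hvw
end

section
/- Let G(E) be a well-formed TFG with node concurrency relation C. Suppose v ∘→ X or X →• v. Then for any node v': (i) if v C̄ v' then w C̄ v' for every w in X; and (ii) if w C̄ v' for every w in X, then v C̄ v'. -/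
open Finset

variable {V : Type} [DecidableEq V]

/-! A node `v` with `v ∘→ X` or `X →• v` takes, in every total well-defined configuration,
the value `∑_{w ∈ X} c(w)` by (CEq). Over `ℕ` such a sum is positive exactly when one of its
summands is, so `v` is concurrent with `v'` exactly when some `w ∈ X` is. -/

theorem TFG.WellDef.cval_eq_sum {G : TFG V} {c : V → Option ℕ} (hwd : G.WellDef c)
    (htot : TotalConf c) {v : V} {X : Finset V}
    (hX : (X = G.aggChildren v ∨ X = G.redParents v) ∧ X.Nonempty) :
    cval c v = ∑ w ∈ X, cval c w := by
  obtain ⟨n, hn⟩ := Option.ne_none_iff_exists'.mp (htot v)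
  rw [cval, hn, Option.getD_some]
  obtain ⟨rfl | rfl, hne⟩ := hX
  · exact (hwd.2 v n hn).1 hne
  · exact (hwd.2 v n hn).2 hne

theorem TFG.WellDef.cval_pos_iff_exists_mem {G : TFG V} {c : V → Option ℕ}
    (hwd : G.WellDef c) (htot : TotalConf c) {v : V} {X : Finset V}
    (hX : (X = G.aggChildren v ∨ X = G.redParents v) ∧ X.Nonempty) :
    0 < cval c v ↔ ∃ w ∈ X, 0 < cval c w := by
  rw [hwd.cval_eq_sum htot hX, Finset.sum_pos_iff]

theorem nodeConc_iff_exists_mem {G : TFG V} {P2 : Set V} [DecidablePred (· ∈ P2)]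
    {N2 : PetriNet ↥P2} {m2 : ↥P2 → ℕ} {v : V} {X : Finset V}
    (hX : (X = G.aggChildren v ∨ X = G.redParents v) ∧ X.Nonempty) (v' : V) :
    NodeConc G P2 N2 m2 v v' ↔ ∃ w ∈ X, NodeConc G P2 N2 m2 w v' := by
  constructor
  · rintro ⟨c, hconf, htot, hwd, hreach, hv, hv'⟩
    obtain ⟨w, hw, hpos⟩ := (hwd.cval_pos_iff_exists_mem htot hX).1 hv
    exact ⟨w, hw, c, hconf, htot, hwd, hreach, hpos, hv'⟩
  · rintro ⟨w, hw, c, hconf, htot, hwd, hreach, hpos, hv'⟩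
    exact ⟨c, hconf, htot, hwd, hreach, (hwd.cval_pos_iff_exists_mem htot hX).2 ⟨w, hw, hpos⟩, hv'⟩

theorem heredity_nonconcurrency_general {V : Type} [DecidableEq V] (G : TFG V)
    (P2 : Set V) [DecidablePred (· ∈ P2)]
    (N2 : PetriNet ↥P2) (m2 : ↥P2 → ℕ)
    (v : V) (X : Finset V)
    (hX : (X = G.aggChildren v ∨ X = G.redParents v) ∧ X.Nonempty) (v' : V) :
    (¬ NodeConc G P2 N2 m2 v v' → ∀ w ∈ X, ¬ NodeConc G P2 N2 m2 w v') ∧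
    ((∀ w ∈ X, ¬ NodeConc G P2 N2 m2 w v') → ¬ NodeConc G P2 N2 m2 v v') := by
  rw [nodeConc_iff_exists_mem hX v']
  exact ⟨fun h w hw hw' => h ⟨w, hw, hw'⟩, fun h ⟨w, hw, hw'⟩ => h w hw hw'⟩

theorem heredity_nonconcurrency {V : Type} [DecidableEq V] (G : TFG V) (E : EqSys V)
    (P1 P2 : Set V) [DecidablePred (· ∈ P1)] [DecidablePred (· ∈ P2)]
    (N1 : PetriNet ↥P1) (m1 : ↥P1 → ℕ) (N2 : PetriNet ↥P2) (m2 : ↥P2 → ℕ)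
    (hwf : WellFormed G E P1 P2) (heq : EEquiv E P1 P2 N1 m1 N2 m2)
    (v : V) (X : Finset V)
    (hX : (X = G.aggChildren v ∨ X = G.redParents v) ∧ X.Nonempty) (v' : V) :
    (¬ NodeConc G P2 N2 m2 v v' → ∀ w ∈ X, ¬ NodeConc G P2 N2 m2 w v') ∧
    ((∀ w ∈ X, ¬ NodeConc G P2 N2 m2 w v') → ¬ NodeConc G P2 N2 m2 v v') :=
  heredity_nonconcurrency_general G P2 N2 m2 v X hX v'
end
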